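/- Let N ∈ ℕ and f, f⁻¹ be maps with ‖Df|_{E^c}‖ ≤ 2N, ‖D²f‖ ≤ N, and m(Df|_{E^c}) ≥ (2N)⁻¹, and suppose X is a unit vector field over a curve γ that is (C₀, 1/2)-Hölder, meaning ‖X_m − X_{m'}‖ ≤ C₀·d(m,m')^{1/2} for all m, m' ∈ γ. If C₀ > 1/10 and N is large enough that 4(1+λ^N)N²λ^N·72 < 1/2 (where 0 < λ < 1 is a fixed constant), then the pushed-forward normalized vector field X₁ = f_*X/‖f_*X‖ is (C₁, 1/2)-Hölder with C₁ < C₀/2; consequently, there exists n₀ (depending only on C₀) such that for all n ≥ n₀ the n-th normalized push-forward X_n is (C_n, 1/2)-Hölder with C_n < 30N²λ^N. -/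

import Mathlib

/-!
Renormalization is `2/c`-Lipschitz on vectors of norm at least `c = (2N)⁻¹`, and `x ↦ D x (X x)`
is ½-Hölder with constant `2N·C + 3N` (the `3N` because `dist ≤ 3 √dist` when `dist ≤ 9`);
precomposing with the `λ^{2N}`-contraction `h` gains a factor `λ^N` on square roots of distances.
So the Hölder constants obey `C_{n+1} ≤ 2K C_n + 3K` with `K = 4N²λ^N < 1/144`, and they converge
geometrically to the fixed point `3K/(1-2K) < 30N²λ^N`.
-/

open Filter Topology

section Normalize

variable {E : Type*} [NormedAddCommGroup E] [NormedSpace ℝ E]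

theorem norm_normalize_sub_normalize_le {u u' : E} {c : ℝ} (hc : 0 < c) (hu : c ≤ ‖u‖)
    (hu' : c ≤ ‖u'‖) :
    ‖NormedSpace.normalize u - NormedSpace.normalize u'‖ ≤ 2 / c * ‖u - u'‖ := by
  have hu0 : 0 < ‖u‖ := hc.trans_le hu
  have hu'0 : 0 < ‖u'‖ := hc.trans_le hu'
  have hsplit : NormedSpace.normalize u - NormedSpace.normalize u' =
      ‖u‖⁻¹ • (u - u') + (‖u‖⁻¹ - ‖u'‖⁻¹) • u' := by
    simp only [NormedSpace.normalize, smul_sub, sub_smul]; abel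
  have hscale : ‖(‖u‖⁻¹ - ‖u'‖⁻¹) • u'‖ = |‖u'‖ - ‖u‖| / ‖u‖ := by
    rw [norm_smul, Real.norm_eq_abs, inv_sub_inv hu0.ne' hu'0.ne', abs_div,
      abs_of_pos (mul_pos hu0 hu'0)]
    field_simp
  calc ‖NormedSpace.normalize u - NormedSpace.normalize u'‖
      ≤ ‖‖u‖⁻¹ • (u - u')‖ + ‖(‖u‖⁻¹ - ‖u'‖⁻¹) • u'‖ := hsplit ▸ norm_add_le _ _
    _ = ‖u - u'‖ / ‖u‖ + |‖u'‖ - ‖u‖| / ‖u‖ := by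
        rw [hscale, norm_smul, norm_inv, norm_norm, inv_mul_eq_div]
    _ ≤ ‖u - u'‖ / ‖u‖ + ‖u - u'‖ / ‖u‖ := by
        gcongr
        rw [norm_sub_rev]
        exact abs_norm_sub_norm_le _ _
    _ ≤ ‖u - u'‖ / c + ‖u - u'‖ / c := by gcongr
    _ = 2 / c * ‖u - u'‖ := by ring

end Normalize

theorem ContinuousLinearMap.norm_apply_sub_apply_le {𝕜 E F : Type*} [NontriviallyNormedField 𝕜]
    [SeminormedAddCommGroup E] [SeminormedAddCommGroup F] [NormedSpace 𝕜 E] [NormedSpace 𝕜 F]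
    (T S : E →L[𝕜] F) (v w : E) :
    ‖T v - S w‖ ≤ ‖T‖ * ‖v - w‖ + ‖T - S‖ * ‖w‖ :=
  calc ‖T v - S w‖ = ‖T (v - w) + (T - S) w‖ := by
        rw [map_sub, sub_apply, sub_add_sub_cancel]
    _ ≤ ‖T‖ * ‖v - w‖ + ‖T - S‖ * ‖w‖ := norm_add_le_of_le (T.le_opNorm _) ((T - S).le_opNorm _)

theorem le_mul_sqrt_of_le_sq {t R : ℝ} (hR : 0 ≤ R) (ht : t ≤ R ^ 2) : t ≤ R * √t := by
  rcases le_or_gt t 0 with ht0 | ht0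
  · rwa [Real.sqrt_eq_zero'.2 ht0, mul_zero]
  · calc t = √t * √t := (Real.mul_self_sqrt ht0.le).symm
      _ ≤ R * √t := by
        gcongr
        exact Real.sqrt_le_iff.2 ⟨hR, ht⟩

theorem exists_le_affine_iterate {P : ℕ → ℝ → Prop} {a b c₀ : ℝ} (ha0 : 0 ≤ a) (ha1 : a < 1)
    (hb : 0 ≤ b) (h0 : P 0 c₀) (hstep : ∀ n c, P n c → P (n + 1) (a * c + b)) (n : ℕ) :
    ∃ c, c ≤ a ^ n * c₀ + b / (1 - a) ∧ P n c := by
  induction n with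
  | zero =>
    have h1a : 0 < 1 - a := by linarith
    exact ⟨c₀, by rw [pow_zero, one_mul]; exact le_add_of_nonneg_right (by positivity), h0⟩
  | succ n ih =>
    obtain ⟨c, hc, hPc⟩ := ih
    refine ⟨a * c + b, ?_, hstep n c hPc⟩
    have h1a : 1 - a ≠ 0 := by linarith
    calc a * c + b ≤ a * (a ^ n * c₀ + b / (1 - a)) + b := by gcongr
      _ = a ^ (n + 1) * c₀ + b / (1 - a) := by field_simp; ring

section Pushforward

variable {α β E : Type*} [PseudoMetricSpace α] [PseudoMetricSpace β] [NormedAddCommGroup E]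
  [NormedSpace ℝ E]

theorem norm_normalize_pushforward_sub_le {g : β → α} {A : α → E →L[ℝ] E} {V : α → E}
    {M L c R θ C : ℝ} (hc : 0 < c) (hL : 0 ≤ L) (hR : 0 ≤ R) (hθ : 0 ≤ θ) (hC : 0 ≤ C)
    (hA : ∀ x, ‖A x‖ ≤ M) (hAlow : ∀ x v, c * ‖v‖ ≤ ‖A x v‖)
    (hAlip : ∀ x y, ‖A x - A y‖ ≤ L * dist x y) (hdiam : ∀ x y : α, dist x y ≤ R ^ 2)
    (hg : ∀ x y, dist (g x) (g y) ≤ θ ^ 2 * dist x y) (hV : ∀ x, ‖V x‖ = 1)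
    (hVH : ∀ x y, ‖V x - V y‖ ≤ C * √(dist x y)) (x y : β) :
    ‖NormedSpace.normalize (A (g x) (V (g x))) - NormedSpace.normalize (A (g y) (V (g y)))‖ ≤
      2 / c * (M * C + L * R) * θ * √(dist x y) := by
  set p := g x
  set q := g y
  have hM : 0 ≤ M := (norm_nonneg _).trans (hA p)
  have hlow : ∀ z, c ≤ ‖A z (V z)‖ := fun z => by simpa [hV] using hAlow z (V z)
  have hpq : √(dist p q) ≤ θ * √(dist x y) := by
    rw [← Real.sqrt_sq hθ, ← Real.sqrt_mul (sq_nonneg θ)]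
    exact Real.sqrt_le_sqrt (hg x y)
  have hAV : ‖A p (V p) - A q (V q)‖ ≤ (M * C + L * R) * √(dist p q) :=
    calc ‖A p (V p) - A q (V q)‖ ≤ ‖A p‖ * ‖V p - V q‖ + ‖A p - A q‖ * ‖V q‖ :=
          (A p).norm_apply_sub_apply_le _ _ _
      _ ≤ M * (C * √(dist p q)) + L * (R * √(dist p q)) * 1 := by
          gcongr
          · exact hA p
          · exact hVH p q
          · exact (hAlip p q).trans (by gcongr; exact le_mul_sqrt_of_le_sq hR (hdiam p q))
          · exact (hV q).le
      _ = (M * C + L * R) * √(dist p q) := by ring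
  calc _ ≤ 2 / c * ‖A p (V p) - A q (V q)‖ :=
        norm_normalize_sub_normalize_le hc (hlow p) (hlow q)
    _ ≤ 2 / c * ((M * C + L * R) * (θ * √(dist x y))) := by
        gcongr
        exact hAV.trans (by gcongr)
    _ = 2 / c * (M * C + L * R) * θ * √(dist x y) := by ring

end Pushforward

theorem stmt16_general {E : Type*} [NormedAddCommGroup E] [NormedSpace ℝ E]
    (γ : ℕ → Type*) [∀ n, MetricSpace (γ n)]
    (N : ℕ) (hN : 1 ≤ N) (lam : ℝ) (hlam0 : 0 < lam)
    (h : ∀ n : ℕ, γ (n + 1) → γ n) (D : ∀ n : ℕ, γ n → E →L[ℝ] E)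
    (hDnorm : ∀ (n : ℕ) (x : γ n), ‖D n x‖ ≤ 2 * (N : ℝ))
    (hDlow : ∀ (n : ℕ) (x : γ n) (v : E), (2 * (N : ℝ))⁻¹ * ‖v‖ ≤ ‖D n x v‖)
    (hDlip : ∀ (n : ℕ) (x y : γ n), ‖D n x - D n y‖ ≤ (N : ℝ) * dist x y)
    (hdiam : ∀ (n : ℕ) (x y : γ n), dist x y ≤ 7)
    (hcontr : ∀ (n : ℕ) (x y : γ (n + 1)),
      dist (h n x) (h n y) ≤ lam ^ (2 * N) * dist x y)
    (X : ∀ n : ℕ, γ n → E) (hunit : ∀ (n : ℕ) (x : γ n), ‖X n x‖ = 1)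
    (hrec : ∀ (n : ℕ) (x : γ (n + 1)),
      X (n + 1) x = ‖D n (h n x) (X n (h n x))‖⁻¹ • D n (h n x) (X n (h n x)))
    (C₀ : ℝ) (hC₀ : 1 / 10 < C₀)
    (hHolder0 : ∀ x y : γ 0, ‖X 0 x - X 0 y‖ ≤ C₀ * dist x y ^ ((1 : ℝ) / 2))
    (hsmall : 4 * (1 + lam ^ N) * (N : ℝ) ^ 2 * lam ^ N * 72 < 1 / 2) :
    (∃ C₁ : ℝ, C₁ < C₀ / 2 ∧
      ∀ x y : γ 1, ‖X 1 x - X 1 y‖ ≤ C₁ * dist x y ^ ((1 : ℝ) / 2)) ∧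
    (∃ n₀ : ℕ, ∀ n ≥ n₀, ∃ Cn : ℝ, Cn < 30 * (N : ℝ) ^ 2 * lam ^ N ∧
      ∀ x y : γ n, ‖X n x - X n y‖ ≤ Cn * dist x y ^ ((1 : ℝ) / 2)) := by
  simp only [← Real.sqrt_eq_rpow] at hHolder0 ⊢
  have hNpos : (0 : ℝ) < N := by exact_mod_cast hN
  have hlamN : 0 < lam ^ N := pow_pos hlam0 N
  set K := 4 * (N : ℝ) ^ 2 * lam ^ N with hK
  have hK0 : 0 < K := by positivity
  have hK144 : K < 1 / 144 := by nlinarith [mul_pos hK0 hlamN]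
  let P : ℕ → ℝ → Prop := fun n c => 0 ≤ c ∧ ∀ x y : γ n, ‖X n x - X n y‖ ≤ c * √(dist x y)
  have hstep : ∀ n c, P n c → P (n + 1) (2 * K * c + 3 * K) := by
    rintro n c ⟨hc, hHc⟩
    refine ⟨by positivity, fun x y => ?_⟩
    have := norm_normalize_pushforward_sub_le (by positivity) hNpos.le (by norm_num : (0 : ℝ) ≤ 3)
      hlamN.le hc (hDnorm n) (hDlow n) (hDlip n) (fun x y => (hdiam n x y).trans (by norm_num))
      (fun x y => pow_mul' lam 2 N ▸ hcontr n x y) (hunit n) hHc x y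
    have hconst : 2 / (2 * (N : ℝ))⁻¹ * (2 * N * c + N * 3) * lam ^ N = 2 * K * c + 3 * K := by
      rw [hK]; field_simp; ring
    rw [hrec, hrec, ← hconst]
    exact this
  refine ⟨⟨2 * K * C₀ + 3 * K, by nlinarith, (hstep 0 C₀ ⟨by linarith, hHolder0⟩).2⟩, ?_⟩
  have hlim : Tendsto (fun n => (2 * K) ^ n * C₀ + 3 * K / (1 - 2 * K)) atTop
      (𝓝 (3 * K / (1 - 2 * K))) := by
    simpa using ((tendsto_pow_atTop_nhds_zero_of_lt_one (by positivity) (by linarith)).mul_const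
      C₀).add_const (3 * K / (1 - 2 * K))
  have hfix : 3 * K / (1 - 2 * K) < 30 * (N : ℝ) ^ 2 * lam ^ N := by
    rw [div_lt_iff₀ (by linarith)]
    nlinarith
  obtain ⟨n₀, hn₀⟩ := eventually_atTop.1 (hlim.eventually_lt_const hfix)
  refine ⟨n₀, fun n hn => ?_⟩
  obtain ⟨c, hc, hPc⟩ := exists_le_affine_iterate (by positivity) (by linarith) (by positivity)
    ⟨hC₀.le.trans' (by norm_num), hHolder0⟩ hstep n
  exact ⟨c, hc.trans_lt (hn₀ n hn), hPc.2⟩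

theorem stmt16 {E : Type*} [NormedAddCommGroup E] [NormedSpace ℝ E]
    (γ : ℕ → Type*) [∀ n, MetricSpace (γ n)]
    (N : ℕ) (hN : 1 ≤ N) (lam : ℝ) (hlam0 : 0 < lam) (hlam1 : lam < 1)
    (h : ∀ n : ℕ, γ (n + 1) → γ n) (D : ∀ n : ℕ, γ n → E →L[ℝ] E)
    (hDnorm : ∀ (n : ℕ) (x : γ n), ‖D n x‖ ≤ 2 * (N : ℝ))
    (hDlow : ∀ (n : ℕ) (x : γ n) (v : E), (2 * (N : ℝ))⁻¹ * ‖v‖ ≤ ‖D n x v‖)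
    (hDlip : ∀ (n : ℕ) (x y : γ n), ‖D n x - D n y‖ ≤ (N : ℝ) * dist x y)
    (hdiam : ∀ (n : ℕ) (x y : γ n), dist x y ≤ 7)
    (hcontr : ∀ (n : ℕ) (x y : γ (n + 1)),
      dist (h n x) (h n y) ≤ lam ^ (2 * N) * dist x y)
    (X : ∀ n : ℕ, γ n → E) (hunit : ∀ (n : ℕ) (x : γ n), ‖X n x‖ = 1)
    (hrec : ∀ (n : ℕ) (x : γ (n + 1)),
      X (n + 1) x = ‖D n (h n x) (X n (h n x))‖⁻¹ • D n (h n x) (X n (h n x)))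
    (C₀ : ℝ) (hC₀ : 1 / 10 < C₀)
    (hHolder0 : ∀ x y : γ 0, ‖X 0 x - X 0 y‖ ≤ C₀ * dist x y ^ ((1 : ℝ) / 2))
    (hsmall : 4 * (1 + lam ^ N) * (N : ℝ) ^ 2 * lam ^ N * 72 < 1 / 2) :
    (∃ C₁ : ℝ, C₁ < C₀ / 2 ∧
      ∀ x y : γ 1, ‖X 1 x - X 1 y‖ ≤ C₁ * dist x y ^ ((1 : ℝ) / 2)) ∧
    (∃ n₀ : ℕ, ∀ n ≥ n₀, ∃ Cn : ℝ, Cn < 30 * (N : ℝ) ^ 2 * lam ^ N ∧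
      ∀ x y : γ n, ‖X n x - X n y‖ ≤ Cn * dist x y ^ ((1 : ℝ) / 2)) :=
  stmt16_general γ N hN lam hlam0 h D hDnorm hDlow hDlip hdiam hcontr X hunit hrec C₀ hC₀ hHolder0
    hsmall
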